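/- Let k_e > 0 and let Ω₀ : [0,∞) → ℝ³ be continuous and bounded, and let k_R > 0 and k_Ω > 0. Then there exist constants C > 0 and λ > 0 such that every solution (Z_s, z, ω) : [0,∞) → Sym(ℝ^{3×3}) × ℝ³ × ℝ³ of the closed-loop system Ż_s = [Z_s, Ω̂₀(t)] − 2k_e Z_s, ż = z × Ω₀(t) + ω, ω̇ = −k_R z − k_Ω ω + ω × Ω₀(t), satisfies ‖Z_s(t)‖ + ‖z(t)‖ + ‖ω(t)‖ ≤ C·e^{−λt}·(‖Z_s(0)‖ + ‖z(0)‖ + ‖ω(0)‖) for all t ≥ 0. -/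

import Mathlib

open Matrix

attribute [local instance] Matrix.frobeniusNormedAddCommGroup Matrix.frobeniusNormedSpace

noncomputable section

abbrev Mat3 := Matrix (Fin 3) (Fin 3) ℝ

/-- Frobenius inner product. -/
def finner (A B : Mat3) : ℝ := (Aᵀ * B).trace

/-- Euclidean norm on ℝ³. -/
def enorm3 (v : Fin 3 → ℝ) : ℝ := Real.sqrt (∑ i, v i ^ 2)

/-- The hat map. -/
def hat (v : Fin 3 → ℝ) : Mat3 :=
  !![0, -v 2, v 1; v 2, 0, -v 0; -v 1, v 0, 0]

/-- The vee map, inverse of the hat map on skew-symmetric matrices. -/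
def vee (A : Mat3) : Fin 3 → ℝ := ![A 2 1, A 0 2, A 1 0]

/-- The cross product on ℝ³. -/
def cross (u v : Fin 3 → ℝ) : Fin 3 → ℝ :=
  ![u 1 * v 2 - u 2 * v 1, u 2 * v 0 - u 0 * v 2, u 0 * v 1 - u 1 * v 0]

/-- Symmetrization operator. -/
def symPart (A : Mat3) : Mat3 := (2⁻¹ : ℝ) • (A + Aᵀ)

/-- Skew-symmetrization operator. -/
def skewPart (A : Mat3) : Mat3 := (2⁻¹ : ℝ) • (A - Aᵀ)

/-- `SO(3)`: rotation matrices. -/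
def SO3 : Set Mat3 := {R | Rᵀ * R = 1 ∧ 0 < R.det}

/-- The matrix commutator. -/
def mcomm (A B : Mat3) : Mat3 := A * B - B * A

/-- A real square matrix is Hurwitz if every complex eigenvalue (root of its
characteristic polynomial over ℂ) has negative real part. -/
def IsHurwitzMat {n : Type*} [Fintype n] [DecidableEq n] (M : Matrix n n ℝ) : Prop :=
  ∀ μ : ℂ, (M.map (algebraMap ℝ ℂ)).charpoly.eval μ = 0 → μ.re < 0

/-- A real polynomial is Hurwitz if all of its complex roots have negative real part. -/
def IsHurwitzPoly (p : Polynomial ℝ) : Prop :=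
  ∀ μ : ℂ, (p.map (algebraMap ℝ ℂ)).eval μ = 0 → μ.re < 0

/-!
Both transport terms are energy-neutral. For symmetric `Z`, `⟨Z, [Z, B]⟩ = tr (Z Z B) - tr (Z B Z) = 0`
by cyclicity of the trace, so `‖Z_s‖²` obeys `d/dt ‖Z_s‖² = -4 k_e ‖Z_s‖²`. The cross-product terms
are orthogonal to `z` and `ω` and cancel in `d/dt ⟨z, ω⟩` by the triple-product identity, so
`(z, ω)` is a damped linear oscillator. For it the cross-term Lyapunov function
`V = k_R |z|² + |ω|² + ε ⟨z, ω⟩` with `ε = min k_Ω (k_R / k_Ω)` is comparable to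
`k_R |z|² + |ω|²` and satisfies `V̇ ≤ -(ε / 2) V`, both by AM–GM and Cauchy–Schwarz.
-/

open Real

theorem le_exp_mul_of_hasDerivAt_le_mul {V V' : ℝ → ℝ} {c : ℝ}
    (hV : ∀ t, 0 ≤ t → HasDerivAt V (V' t) t) (hV' : ∀ t, 0 ≤ t → V' t ≤ -c * V t)
    {t : ℝ} (ht : 0 ≤ t) : V t ≤ exp (-c * t) * V 0 := by
  have hanti : AntitoneOn (fun s => V s * exp (c * s)) (Set.Ici 0) := by
    refine antitoneOn_of_hasDerivWithinAt_nonpos (convex_Ici 0)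
      (f' := fun s => (V' s + c * V s) * exp (c * s))
      (fun s hs => ((hV s hs).continuousAt.mul (by fun_prop)).continuousWithinAt)
      (fun s hs => ?_) (fun s hs => ?_)
    · rw [interior_Ici] at hs
      have := (hV s (le_of_lt hs)).mul (((hasDerivAt_id s).const_mul c).exp)
      exact (this.congr_deriv (by simp only [id]; ring)).hasDerivWithinAt
    · rw [interior_Ici] at hs
      exact mul_nonpos_of_nonpos_of_nonneg (by linarith [hV' s (le_of_lt hs)]) (exp_pos _).le
  have hle := hanti (Set.mem_Ici.2 le_rfl) ht ht
  simp only [mul_zero, exp_zero, mul_one] at hle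
  calc V t = V t * exp (c * t) * exp (-c * t) := by
        rw [mul_assoc, ← exp_add]; simp
    _ ≤ V 0 * exp (-c * t) := by gcongr
    _ = exp (-c * t) * V 0 := mul_comm _ _

theorem dotProduct_self_nonneg {ι : Type*} [Fintype ι] (v : ι → ℝ) : 0 ≤ v ⬝ᵥ v :=
  Finset.sum_nonneg fun i _ => mul_self_nonneg (v i)

theorem sq_dotProduct_le {ι : Type*} [Fintype ι] (u v : ι → ℝ) :
    (u ⬝ᵥ v) ^ 2 ≤ (u ⬝ᵥ u) * (v ⬝ᵥ v) := by
  simpa only [dotProduct, sq] using Finset.sum_mul_sq_le_sq_mul_sq Finset.univ u v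

theorem HasDerivAt.dotProduct {ι : Type*} [Fintype ι] {u v : ℝ → ι → ℝ} {u' v' : ι → ℝ}
    {t : ℝ} (hu : HasDerivAt u u' t) (hv : HasDerivAt v v' t) :
    HasDerivAt (fun s => u s ⬝ᵥ v s) (u' ⬝ᵥ v t + u t ⬝ᵥ v') t := by
  have := HasDerivAt.fun_sum (u := Finset.univ) fun i _ =>
    (hasDerivAt_pi.1 hu i).fun_mul (hasDerivAt_pi.1 hv i)
  exact this.congr_deriv Finset.sum_add_distrib

theorem abs_mul_le_of_sq_le {p q r b c d : ℝ} (hp : 0 ≤ p) (hq : 0 ≤ q) (hb : 0 ≤ b)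
    (hc : 0 ≤ c) (hr : r ^ 2 ≤ 4 * p * q) (hd : d ^ 2 ≤ b * c) : |r * d| ≤ p * b + q * c := by
  refine abs_le_of_sq_le_sq ?_ (by positivity)
  calc (r * d) ^ 2 = r ^ 2 * d ^ 2 := mul_pow r d 2
    _ ≤ (4 * p * q) * (b * c) := by gcongr
    _ ≤ (p * b + q * c) ^ 2 := by nlinarith [sq_nonneg (p * b - q * c)]

section Frobenius

variable {m n : Type*} [Fintype m] [Fintype n]

theorem trace_transpose_mul_eq_sum_dotProduct (A B : Matrix m n ℝ) :
    (Aᵀ * B).trace = ∑ i, A i ⬝ᵥ B i := by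
  simp only [trace, diag, mul_apply, transpose_apply, dotProduct]
  exact Finset.sum_comm

theorem frobenius_norm_sq_eq_trace (A : Matrix m n ℝ) : ‖A‖ ^ 2 = (Aᵀ * A).trace := by
  rw [frobenius_norm_def, ← sqrt_eq_rpow, sq_sqrt (by positivity),
    trace_transpose_mul_eq_sum_dotProduct]
  simp [dotProduct, sq]

theorem HasDerivAt.frobenius_norm_sq {f : ℝ → Matrix m n ℝ} {f' : Matrix m n ℝ} {t : ℝ}
    (hf : HasDerivAt f f' t) :
    HasDerivAt (fun s => ‖f s‖ ^ 2) (2 * ((f t)ᵀ * f').trace) t := by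
  have := HasDerivAt.fun_sum (u := Finset.univ) fun i _ =>
    (hasDerivAt_pi.1 hf i).dotProduct (hasDerivAt_pi.1 hf i)
  simp only [frobenius_norm_sq_eq_trace, trace_transpose_mul_eq_sum_dotProduct]
  refine this.congr_deriv ?_
  simp only [dotProduct_comm (f' _), Finset.mul_sum, two_mul, Finset.sum_add_distrib]

theorem trace_transpose_mul_commutator_eq_zero {R : Type*} [CommRing R] {Z : Matrix n n R}
    (hZ : Zᵀ = Z) (B : Matrix n n R) : (Zᵀ * (Z * B - B * Z)).trace = 0 := by
  rw [hZ, Matrix.mul_sub, trace_sub, trace_mul_cycle' Z B Z, sub_self]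

theorem norm_le_exp_mul_of_hasDerivAt_commutator {Z B : ℝ → Matrix n n ℝ} {a : ℝ}
    (hsym : ∀ t, 0 ≤ t → (Z t)ᵀ = Z t)
    (hZ : ∀ t, 0 ≤ t → HasDerivAt Z (Z t * B t - B t * Z t - a • Z t) t) {t : ℝ} (ht : 0 ≤ t) :
    ‖Z t‖ ≤ exp (-a * t) * ‖Z 0‖ := by
  have hsq : ‖Z t‖ ^ 2 ≤ exp (-(2 * a) * t) * ‖Z 0‖ ^ 2 :=
    le_exp_mul_of_hasDerivAt_le_mul (fun s hs => (hZ s hs).frobenius_norm_sq) (fun s hs => by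
      rw [Matrix.mul_sub, trace_sub, trace_transpose_mul_commutator_eq_zero (hsym s hs),
        Matrix.mul_smul, trace_smul, ← frobenius_norm_sq_eq_trace, smul_eq_mul]
      linarith) ht
  have hexp : exp (-(2 * a) * t) = exp (-a * t) ^ 2 := by
    rw [← exp_nat_mul]; ring_nf
  rw [hexp, ← mul_pow] at hsq
  exact le_of_sq_le_sq hsq (by positivity)

end Frobenius

theorem cross_eq_crossProduct (u v : Fin 3 → ℝ) : cross u v = u ⨯₃ v :=
  (cross_apply u v).symm

theorem enorm3_nonneg (v : Fin 3 → ℝ) : 0 ≤ enorm3 v :=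
  sqrt_nonneg _

theorem enorm3_sq (v : Fin 3 → ℝ) : enorm3 v ^ 2 = v ⬝ᵥ v := by
  rw [enorm3, sq_sqrt (by positivity)]
  simp only [dotProduct, sq]

theorem add_le_of_weighted_sq_le {k x y x₀ y₀ A : ℝ} (hk : 0 < k) (hx₀ : 0 ≤ x₀) (hy₀ : 0 ≤ y₀)
    (hA : 0 ≤ A) (h : k * x ^ 2 + y ^ 2 ≤ A ^ 2 * (k * x₀ ^ 2 + y₀ ^ 2)) :
    x + y ≤ (1 + k) * √(2 / k) * A * (x₀ + y₀) := by
  refine le_of_sq_le_sq ?_ (by positivity)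
  have h₀ : k * x₀ ^ 2 + y₀ ^ 2 ≤ (1 + k) * (x₀ + y₀) ^ 2 := by nlinarith [mul_nonneg hx₀ hy₀]
  calc (x + y) ^ 2 ≤ 2 * (1 + k) / k * (k * x ^ 2 + y ^ 2) := by
        rw [div_mul_eq_mul_div, le_div_iff₀ hk]
        nlinarith [mul_nonneg hk.le (sq_nonneg (x - y)),
          mul_nonneg (mul_nonneg hk.le hk.le) (sq_nonneg x), sq_nonneg y]
    _ ≤ 2 * (1 + k) / k * (A ^ 2 * ((1 + k) * (x₀ + y₀) ^ 2)) := by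
        gcongr
        exact h.trans (by gcongr)
    _ = ((1 + k) * √(2 / k) * A * (x₀ + y₀)) ^ 2 := by
        rw [mul_pow, mul_pow, mul_pow, sq_sqrt (by positivity)]
        field_simp

def trackingLyapunov (kR ε : ℝ) (z ω : Fin 3 → ℝ) : ℝ :=
  kR * (z ⬝ᵥ z) + ω ⬝ᵥ ω + ε * (z ⬝ᵥ ω)

section TrackingError

variable {kR kΩ ε : ℝ}

theorem hasDerivAt_trackingLyapunov {Ω z ω : ℝ → Fin 3 → ℝ} {t : ℝ}
    (hz : HasDerivAt z (cross (z t) (Ω t) + ω t) t)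
    (hω : HasDerivAt ω ((-kR) • z t - kΩ • ω t + cross (ω t) (Ω t)) t) :
    HasDerivAt (fun s => trackingLyapunov kR ε (z s) (ω s))
      (-2 * kΩ * (ω t ⬝ᵥ ω t) + ε * (ω t ⬝ᵥ ω t - kR * (z t ⬝ᵥ z t) - kΩ * (z t ⬝ᵥ ω t))) t := by
  have h := (((hz.dotProduct hz).const_mul kR).add (hω.dotProduct hω)).add
    ((hz.dotProduct hω).const_mul ε)
  refine h.congr_deriv ?_
  simp only [cross_eq_crossProduct, add_dotProduct, sub_dotProduct, dotProduct_add,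
    dotProduct_sub, smul_dotProduct, dotProduct_smul, smul_eq_mul]
  have hzz := dot_self_cross (z t) (Ω t)
  have hωω := dot_self_cross (ω t) (Ω t)
  have htriple : z t ⨯₃ Ω t ⬝ᵥ ω t + z t ⬝ᵥ ω t ⨯₃ Ω t = 0 := by
    rw [dotProduct_comm, triple_product_permutation, ← cross_anticomm, dotProduct_neg,
      neg_add_cancel]
  linear_combination (2 * kR) * hzz + 2 * hωω + ε * htriple
    + kR * dotProduct_comm (z t ⨯₃ Ω t) (z t) + dotProduct_comm (ω t ⨯₃ Ω t) (ω t)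

theorem abs_trackingLyapunov_sub_le (hε : ε ^ 2 ≤ kR) (z ω : Fin 3 → ℝ) :
    |trackingLyapunov kR ε z ω - (kR * (z ⬝ᵥ z) + ω ⬝ᵥ ω)| ≤ (kR * (z ⬝ᵥ z) + ω ⬝ᵥ ω) / 2 := by
  have h := abs_mul_le_of_sq_le (p := kR / 2) (q := 1 / 2) (r := ε) (by nlinarith) (by norm_num)
    (dotProduct_self_nonneg z) (dotProduct_self_nonneg ω) (by linarith) (sq_dotProduct_le z ω)
  rw [trackingLyapunov, add_sub_cancel_left]
  linarith

theorem trackingLyapunov_deriv_le (hε : 0 < ε) (hεΩ : ε ≤ kΩ) (hεR : ε * kΩ ≤ kR)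
    (z ω : Fin 3 → ℝ) :
    -2 * kΩ * (ω ⬝ᵥ ω) + ε * (ω ⬝ᵥ ω - kR * (z ⬝ᵥ z) - kΩ * (z ⬝ᵥ ω)) ≤
      -(ε / 2) * trackingLyapunov kR ε z ω := by
  have hkR : 0 ≤ kR := le_trans (mul_nonneg hε.le (hε.le.trans hεΩ)) hεR
  -- `V̇ + (ε / 2) V = -(ε k_R / 2) |z|² - (2 k_Ω - 3 ε / 2) |ω|² - ε (k_Ω - ε / 2) ⟨z, ω⟩`
  have hr : (ε * (kΩ - ε / 2)) ^ 2 ≤ 4 * (ε * kR / 2) * (2 * kΩ - 3 / 2 * ε) :=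
    calc (ε * (kΩ - ε / 2)) ^ 2 ≤ (ε * kΩ) * (ε * kΩ) := by
          rw [sq]; gcongr <;> nlinarith
      _ ≤ kR * (ε * kΩ) := by gcongr; nlinarith
      _ ≤ 4 * (ε * kR / 2) * (2 * kΩ - 3 / 2 * ε) := by nlinarith [mul_nonneg hε.le hkR]
  have h := abs_mul_le_of_sq_le (div_nonneg (mul_nonneg hε.le hkR) zero_le_two) (by linarith)
    (dotProduct_self_nonneg z) (dotProduct_self_nonneg ω) hr (sq_dotProduct_le z ω)
  rw [trackingLyapunov]
  linarith [neg_abs_le (ε * (kΩ - ε / 2) * (z ⬝ᵥ ω))]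

theorem exists_trackingError_decay (hkR : 0 < kR) (hkΩ : 0 < kΩ) :
    ∃ K > (0 : ℝ), ∃ μ > (0 : ℝ), ∀ Ω z ω : ℝ → Fin 3 → ℝ,
      (∀ t, 0 ≤ t → HasDerivAt z (cross (z t) (Ω t) + ω t) t) →
      (∀ t, 0 ≤ t → HasDerivAt ω ((-kR) • z t - kΩ • ω t + cross (ω t) (Ω t)) t) →
      ∀ t, 0 ≤ t → enorm3 (z t) + enorm3 (ω t) ≤
        K * exp (-μ * t) * (enorm3 (z 0) + enorm3 (ω 0)) := by
  set ε := min kΩ (kR / kΩ)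
  have hε : 0 < ε := lt_min hkΩ (div_pos hkR hkΩ)
  have hεΩ : ε ≤ kΩ := min_le_left _ _
  have hεR : ε * kΩ ≤ kR := (le_div_iff₀ hkΩ).1 (min_le_right _ _)
  have hε2 : ε ^ 2 ≤ kR := by nlinarith
  refine ⟨(1 + kR) * √(2 / kR) * √3, by positivity, ε / 4, by positivity,
    fun Ω z ω hz hω t ht => ?_⟩
  have hdecay : kR * (z t ⬝ᵥ z t) + ω t ⬝ᵥ ω t ≤
      (√3 * exp (-(ε / 4) * t)) ^ 2 * (kR * (z 0 ⬝ᵥ z 0) + ω 0 ⬝ᵥ ω 0) := by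
    have hV := le_exp_mul_of_hasDerivAt_le_mul (c := ε / 2)
      (fun s hs => hasDerivAt_trackingLyapunov (ε := ε) (hz s hs) (hω s hs))
      (fun s hs => trackingLyapunov_deriv_le hε hεΩ hεR (z s) (ω s)) ht
    have hVt := abs_le.1 (abs_trackingLyapunov_sub_le hε2 (z t) (ω t))
    have hV0 := abs_le.1 (abs_trackingLyapunov_sub_le hε2 (z 0) (ω 0))
    have hA : (√3 * exp (-(ε / 4) * t)) ^ 2 = 3 * exp (-(ε / 2) * t) := by
      rw [mul_pow, sq_sqrt zero_le_three, ← exp_nat_mul]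
      ring_nf
    rw [hA]
    nlinarith [exp_pos (-(ε / 2) * t)]
  rw [← enorm3_sq, ← enorm3_sq, ← enorm3_sq, ← enorm3_sq] at hdecay
  exact (add_le_of_weighted_sq_le hkR (enorm3_nonneg _) (enorm3_nonneg _) (by positivity)
    hdecay).trans_eq (by ring)

end TrackingError

theorem prop5_exp_stabilization_general (ke : ℝ) (hke : 0 < ke)
    (Ω₀ : ℝ → Fin 3 → ℝ)
    (kR kΩ : ℝ) (hkR : 0 < kR) (hkΩ : 0 < kΩ) :
    ∃ C > (0:ℝ), ∃ lam > (0:ℝ),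
      ∀ (Zs : ℝ → Mat3) (z ω : ℝ → Fin 3 → ℝ),
        (∀ t, 0 ≤ t → (Zs t)ᵀ = Zs t) →
        (∀ t, 0 ≤ t →
          HasDerivAt Zs (mcomm (Zs t) (hat (Ω₀ t)) - (2 * ke) • Zs t) t) →
        (∀ t, 0 ≤ t → HasDerivAt z (cross (z t) (Ω₀ t) + ω t) t) →
        (∀ t, 0 ≤ t → HasDerivAt ω
          ((-kR) • z t - kΩ • ω t + cross (ω t) (Ω₀ t)) t) →
        ∀ t, 0 ≤ t →
          ‖Zs t‖ + enorm3 (z t) + enorm3 (ω t) ≤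
            C * Real.exp (-lam * t) * (‖Zs 0‖ + enorm3 (z 0) + enorm3 (ω 0)) := by
  obtain ⟨K, hK, μ, hμ, htracking⟩ := exists_trackingError_decay hkR hkΩ
  refine ⟨1 + K, by positivity, min (2 * ke) μ, lt_min (by positivity) hμ,
    fun Zs z ω hsym hZ hz hω t ht => ?_⟩
  have hZt : ‖Zs t‖ ≤ exp (-(2 * ke) * t) * ‖Zs 0‖ :=
    norm_le_exp_mul_of_hasDerivAt_commutator (B := fun s => hat (Ω₀ s)) hsym hZ ht
  have hzωt := htracking Ω₀ z ω hz hω t ht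
  set E := exp (-min (2 * ke) μ * t)
  have hE : 0 ≤ E := (exp_pos _).le
  have hZrate : exp (-(2 * ke) * t) ≤ E :=
    exp_le_exp.2 (mul_le_mul_of_nonneg_right (neg_le_neg (min_le_left _ _)) ht)
  have hzωrate : exp (-μ * t) ≤ E :=
    exp_le_exp.2 (mul_le_mul_of_nonneg_right (neg_le_neg (min_le_right _ _)) ht)
  have hs₀ : 0 ≤ enorm3 (z 0) + enorm3 (ω 0) := add_nonneg (enorm3_nonneg _) (enorm3_nonneg _)
  calc ‖Zs t‖ + enorm3 (z t) + enorm3 (ω t)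
      ≤ E * ‖Zs 0‖ + K * E * (enorm3 (z 0) + enorm3 (ω 0)) := by
        rw [add_assoc]
        gcongr
        · exact hZt.trans (mul_le_mul_of_nonneg_right hZrate (norm_nonneg _))
        · exact hzωt.trans (by gcongr)
    _ ≤ (1 + K) * E * (‖Zs 0‖ + enorm3 (z 0) + enorm3 (ω 0)) := by
        nlinarith [mul_nonneg (mul_nonneg hK.le hE) (norm_nonneg (Zs 0)), mul_nonneg hE hs₀]

/-- Proposition 5: the feedback `Δu = −k_R z − k_Ω ΔΩ + ΔΩ × Ω₀` exponentially
stabilizes the origin of the linearized rigid body tracking error dynamics. -/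
theorem prop5_exp_stabilization (ke : ℝ) (hke : 0 < ke)
    (Ω₀ : ℝ → Fin 3 → ℝ)
    (hΩ₀cont : ContinuousOn Ω₀ (Set.Ici 0))
    (hΩ₀bdd : ∃ M, ∀ t, 0 ≤ t → enorm3 (Ω₀ t) ≤ M)
    (kR kΩ : ℝ) (hkR : 0 < kR) (hkΩ : 0 < kΩ) :
    ∃ C > (0:ℝ), ∃ lam > (0:ℝ),
      ∀ (Zs : ℝ → Mat3) (z ω : ℝ → Fin 3 → ℝ),
        (∀ t, 0 ≤ t → (Zs t)ᵀ = Zs t) →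
        (∀ t, 0 ≤ t →
          HasDerivAt Zs (mcomm (Zs t) (hat (Ω₀ t)) - (2 * ke) • Zs t) t) →
        (∀ t, 0 ≤ t → HasDerivAt z (cross (z t) (Ω₀ t) + ω t) t) →
        (∀ t, 0 ≤ t → HasDerivAt ω
          ((-kR) • z t - kΩ • ω t + cross (ω t) (Ω₀ t)) t) →
        ∀ t, 0 ≤ t →
          ‖Zs t‖ + enorm3 (z t) + enorm3 (ω t) ≤
            C * Real.exp (-lam * t) * (‖Zs 0‖ + enorm3 (z 0) + enorm3 (ω 0)) :=
  prop5_exp_stabilization_general ke hke Ω₀ kR kΩ hkR hkΩ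
end
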